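/- Let α be the field automorphism of ℚ(A₁,A₂,A₃) determined by α(A_i) = A_i·η² where η = (A₁²+A₂²+A₃²)/(A₁A₂A₃), and let μ_k be the Markov mutation in direction k (substituting A_k ↦ (A_{k+1}²+A_{k+2}²)/A_k). Then α ∘ μ_k = μ_k ∘ α as maps on rational functions, i.e., for every f ∈ ℚ(A₁,A₂,A₃), applying mutation then α yields the same result as applying α then mutation. -/

import Mathlib

open MvPolynomial

/-- The field of rational functions ℚ(A₁,A₂,A₃). -/
noncomputable abbrev Kf : Type := FractionRing (MvPolynomial (Fin 3) ℚ)

/-- The generator Aᵢ of ℚ(A₁,A₂,A₃) (indexed by `Fin 3`). -/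
noncomputable def Av (i : Fin 3) : Kf := algebraMap (MvPolynomial (Fin 3) ℚ) Kf (X i)

/-- η = (A₁²+A₂²+A₃²)/(A₁A₂A₃). -/
noncomputable def ηv : Kf := (Av 0 ^ 2 + Av 1 ^ 2 + Av 2 ^ 2) / (Av 0 * Av 1 * Av 2)

/-!
A ring endomorphism of ℚ(A₁,A₂,A₃) is determined by the images of the Aᵢ, so it suffices to
compare `α ∘ μ` and `μ ∘ α` on generators. The mutation fixes η, because η is the value of
(a² + b² + c²)/(abc), which is invariant under the Vieta exchange a ↦ (b² + c²)/a. Hence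
`μ (α Aᵢ) = μ Aᵢ · η²`, and this equals `α (μ Aᵢ)` since (b² + c²)/a is homogeneous of
degree one.
-/

theorem FractionRing.mvPolynomial_ringHom_ext {σ S : Type*} [Semiring S]
    {f g : FractionRing (MvPolynomial σ ℚ) →+* S}
    (h : ∀ i, f (algebraMap (MvPolynomial σ ℚ) _ (X i)) =
      g (algebraMap (MvPolynomial σ ℚ) _ (X i))) : f = g :=
  IsLocalization.ringHom_ext (nonZeroDivisors _) <|
    MvPolynomial.ringHom_ext (fun q => RingHom.congr_fun (RingHom.ext_rat
      ((f.comp (algebraMap _ _)).comp C) ((g.comp (algebraMap _ _)).comp C)) q) h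

section MarkovRatio

variable {F : Type*} [Field F]

def markovRatio (a b c : F) : F := (a ^ 2 + b ^ 2 + c ^ 2) / (a * b * c)

theorem markovRatio_exchange {a b c : F} (ha : a ≠ 0) (hbc : b ^ 2 + c ^ 2 ≠ 0) :
    markovRatio ((b ^ 2 + c ^ 2) / a) b c = markovRatio a b c := by
  unfold markovRatio
  field_simp
  ring

theorem exchange_homogeneous (a b c t : F) :
    ((b * t) ^ 2 + (c * t) ^ 2) / (a * t) = (b ^ 2 + c ^ 2) / a * t := by
  rcases eq_or_ne t 0 with rfl | ht
  · simp
  · field_simp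

end MarkovRatio

theorem Av_ne_zero (i : Fin 3) : Av i ≠ 0 :=
  (map_ne_zero_iff _ (IsFractionRing.injective _ _)).mpr (X_ne_zero i)

theorem Av_sq_add_Av_sq_ne_zero (i j : Fin 3) : Av i ^ 2 + Av j ^ 2 ≠ 0 := by
  have hpoly : (X i ^ 2 + X j ^ 2 : MvPolynomial (Fin 3) ℚ) ≠ 0 := fun h => by
    simpa using congrArg (eval fun _ => (1 : ℚ)) h
  simpa [Av] using (map_ne_zero_iff _ (IsFractionRing.injective _ Kf)).mpr hpoly

theorem ηv_eq_markovRatio (k : Fin 3) : ηv = markovRatio (Av k) (Av (k + 1)) (Av (k + 2)) := by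
  fin_cases k <;>
    simp only [ηv, markovRatio, Fin.isValue, Fin.zero_eta, Fin.mk_one, Fin.reduceFinMk,
      Fin.reduceAdd, zero_add] <;> ring

theorem map_ηv_of_mutation {k : Fin 3} {μ : Kf →+* Kf}
    (hμk : μ (Av k) = (Av (k + 1) ^ 2 + Av (k + 2) ^ 2) / Av k)
    (hμ : ∀ i : Fin 3, i ≠ k → μ (Av i) = Av i) : μ ηv = ηv := by
  have h1 : μ (Av (k + 1)) = Av (k + 1) := hμ _ (by fin_cases k <;> decide)
  have h2 : μ (Av (k + 2)) = Av (k + 2) := hμ _ (by fin_cases k <;> decide)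
  rw [ηv_eq_markovRatio k, markovRatio]
  simp only [map_div₀, map_add, map_mul, map_pow, hμk, h1, h2]
  exact markovRatio_exchange (Av_ne_zero k) (Av_sq_add_Av_sq_ne_zero _ _)

/-- the automorphism α with α(Aᵢ) = Aᵢη² commutes with the Markov
mutation μ_k (substituting A_k ↦ (A_{k+1}²+A_{k+2}²)/A_k). -/
theorem alpha_commutes_with_markov_mutation (k : Fin 3) (α μ : Kf →+* Kf)
    (hα : ∀ i : Fin 3, α (Av i) = Av i * ηv ^ 2)
    (hμk : μ (Av k) = (Av (k + 1) ^ 2 + Av (k + 2) ^ 2) / Av k)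
    (hμ : ∀ i : Fin 3, i ≠ k → μ (Av i) = Av i) :
    ∀ f : Kf, α (μ f) = μ (α f) := by
  have hη : μ ηv = ηv := map_ηv_of_mutation hμk hμ
  suffices h : α.comp μ = μ.comp α from fun f => RingHom.congr_fun h f
  refine FractionRing.mvPolynomial_ringHom_ext fun i => ?_
  change α (μ (Av i)) = μ (α (Av i))
  rw [hα, map_mul, map_pow, hη]
  by_cases hik : i = k
  · subst hik
    rw [hμk, map_div₀, map_add, map_pow, map_pow, hα, hα, hα, exchange_homogeneous]
  · rw [hμ i hik, hα]
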